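/- Let ϕᵢ solve the Riccati differential equation dϕᵢ/dτ = −γᵢ((1/(αᵢσᵢ))ϕᵢ² + 1) with ϕᵢ(0) = 1/λᵢ, where γᵢ > 0, αᵢσᵢ > 0 and λᵢ ∈ (0,1). Then ϕᵢ is strictly decreasing and ϕᵢ(τ) = λᵢ exactly at τ = −(√(αᵢσᵢ)/γᵢ) · arctan( (λᵢ²−1)√(αᵢσᵢ) / (λᵢ(αᵢσᵢ+1)) ), which is a strictly positive number. -/

import Mathlib

/-!
Along a solution of `ϕ' = -γ (ϕ² / a + 1)` the phase `arctan (ϕ τ / √a) + (γ / √a) τ` has zero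
derivative, so `arctan (ϕ τ / √a)` decreases linearly at rate `γ / √a`. Hence `ϕ` is strictly
decreasing and reaches `λ` exactly at `τ = (√a / γ) (arctan (1 / (λ √a)) - arctan (λ / √a))`,
which is positive because `λ < 1 / λ`; the arctangent subtraction formula turns this into the
stated closed form.
-/

open Real Set

theorem Real.arctan_sub_arctan {x y : ℝ} (h : -1 < x * y) :
    arctan x - arctan y = arctan ((x - y) / (1 + x * y)) := by
  rw [sub_eq_add_neg, ← arctan_neg, arctan_add (by linarith), mul_neg, sub_neg_eq_add,
    ← sub_eq_add_neg]

section Riccati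

variable {γ a : ℝ} {ϕ : ℝ → ℝ}

theorem hasDerivAt_arctan_div_sqrt_add_mul (ha : 0 < a) {τ : ℝ}
    (hϕ : HasDerivAt ϕ (-(γ * ((1 / a) * ϕ τ ^ 2 + 1))) τ) :
    HasDerivAt (fun t => arctan (ϕ t / √a) + γ / √a * t) 0 τ := by
  have hr : 0 < √a := sqrt_pos.2 ha
  have hsq : √a ^ 2 = a := sq_sqrt ha.le
  refine (((hϕ.div_const √a).arctan).add ((hasDerivAt_id τ).const_mul (γ / √a))).congr_deriv ?_
  field_simp
  rw [hsq]
  ring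

theorem arctan_div_sqrt_add_mul_eq (ha : 0 < a) {t₀ t₁ : ℝ}
    (hode : ∀ τ ∈ Icc t₀ t₁, HasDerivAt ϕ (-(γ * ((1 / a) * ϕ τ ^ 2 + 1))) τ) :
    ∀ τ ∈ Icc t₀ t₁, arctan (ϕ τ / √a) + γ / √a * τ = arctan (ϕ t₀ / √a) + γ / √a * t₀ := by
  have hderiv τ (hτ : τ ∈ Icc t₀ t₁) := hasDerivAt_arctan_div_sqrt_add_mul ha (hode τ hτ)
  exact constant_of_has_deriv_right_zero
    (fun τ hτ => (hderiv τ hτ).continuousAt.continuousWithinAt)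
    (fun τ hτ => (hderiv τ (Ico_subset_Icc_self hτ)).hasDerivWithinAt)

end Riccati

theorem strictAntiOn_of_arctan_div_add_mul_eq {ϕ : ℝ → ℝ} {s : Set ℝ} {r k C : ℝ}
    (hr : 0 < r) (hk : 0 < k) (h : ∀ τ ∈ s, arctan (ϕ τ / r) + k * τ = C) :
    StrictAntiOn ϕ s := by
  intro x hx y hy hxy
  have hlt : arctan (ϕ y / r) < arctan (ϕ x / r) := by
    linarith [h x hx, h y hy, mul_lt_mul_of_pos_left hxy hk]
  rwa [arctan_lt_arctan_iff, div_lt_div_iff_of_pos_right hr] at hlt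

theorem clock_miet_general (γ asig lam T : ℝ) (hγ : 0 < γ) (hasig : 0 < asig)
    (hlam0 : 0 < lam) (hlam1 : lam < 1)
    (ϕ : ℝ → ℝ) (hϕ0 : ϕ 0 = 1 / lam)
    (hode : ∀ τ ∈ Set.Icc 0 T,
      HasDerivAt ϕ (-(γ * ((1 / asig) * (ϕ τ) ^ 2 + 1))) τ)
    (τMIET : ℝ)
    (hτMIET : τMIET =
      -(Real.sqrt asig / γ) *
        Real.arctan ((lam ^ 2 - 1) * Real.sqrt asig / (lam * (asig + 1)))) :
    0 < τMIET ∧ StrictAntiOn ϕ (Set.Icc 0 T) ∧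
      (∀ τ ∈ Set.Icc 0 T, (ϕ τ = lam ↔ τ = τMIET)) := by
  have hr : 0 < √asig := sqrt_pos.2 hasig
  have hphase : ∀ τ ∈ Icc 0 T,
      arctan (ϕ τ / √asig) + γ / √asig * τ = arctan (1 / lam / √asig) := by
    simpa [hϕ0] using arctan_div_sqrt_add_mul_eq hasig hode
  have hMIET : τMIET = √asig / γ * (arctan (1 / lam / √asig) - arctan (lam / √asig)) := by
    have hprod : 0 ≤ 1 / lam / √asig * (lam / √asig) := by positivity
    rw [hτMIET, arctan_sub_arctan (by linarith), neg_mul, ← mul_neg, ← arctan_neg]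
    congr 2
    field_simp
    rw [sq_sqrt hasig.le]
    ring
  refine ⟨?_, strictAntiOn_of_arctan_div_add_mul_eq hr (by positivity) hphase, fun τ hτ => ?_⟩
  · have hlam : lam < 1 / lam := by rw [lt_div_iff₀ hlam0]; nlinarith
    rw [hMIET]
    exact mul_pos (by positivity) (sub_pos.2 (arctan_strictMono (div_lt_div_of_pos_right hlam hr)))
  · have hshift : √asig / γ * (arctan (ϕ τ / √asig) + γ / √asig * τ - arctan (lam / √asig)) =
        τ + √asig / γ * (arctan (ϕ τ / √asig) - arctan (lam / √asig)) := by
      field_simp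
      ring
    rw [hMIET, ← hphase τ hτ, hshift, left_eq_add, mul_eq_zero, sub_eq_zero, arctan_inj,
      div_left_inj' hr.ne']
    simp only [div_eq_zero_iff, hr.ne', hγ.ne', or_false, false_or]

/-- The clock function `ϕ` solving `ϕ' = −γ((1/(ασ))ϕ² + 1)`, `ϕ(0) = 1/λ`, with `γ > 0`,
`ασ > 0`, `λ ∈ (0,1)`, is strictly decreasing on `[0,T]`, and reaches the value `λ`
exactly at `τ_MIET = −(√(ασ)/γ)·arctan((λ²−1)√(ασ)/(λ(ασ+1)))`, which is strictly
positive. -/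
theorem clock_miet (γ asig lam T : ℝ) (hγ : 0 < γ) (hasig : 0 < asig)
    (hlam0 : 0 < lam) (hlam1 : lam < 1) (hT : 0 < T)
    (ϕ : ℝ → ℝ) (hϕ0 : ϕ 0 = 1 / lam)
    (hode : ∀ τ ∈ Set.Icc 0 T,
      HasDerivAt ϕ (-(γ * ((1 / asig) * (ϕ τ) ^ 2 + 1))) τ)
    (τMIET : ℝ)
    (hτMIET : τMIET =
      -(Real.sqrt asig / γ) *
        Real.arctan ((lam ^ 2 - 1) * Real.sqrt asig / (lam * (asig + 1))))
    (hTle : τMIET ≤ T) :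
    0 < τMIET ∧ StrictAntiOn ϕ (Set.Icc 0 T) ∧
      (∀ τ ∈ Set.Icc 0 T, (ϕ τ = lam ↔ τ = τMIET)) :=
  clock_miet_general γ asig lam T hγ hasig hlam0 hlam1 ϕ hϕ0 hode τMIET hτMIET
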